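/- arXiv:1008.3986 — 2 statements merged into one kernel-verified Lean document; each statement's English description precedes it below -/
import Mathlib

section
/- Let K ⊆ ℝ^ρ be a closed convex cone and f : K → ℝ≥0 a function that is homogeneous of degree n on the interior of K (i.e., f(tv) = t^n f(v) for t > 0) and log-concave of degree n (i.e., f(v+w)^(1/n) ≥ f(v)^(1/n) + f(w)^(1/n) for v, w in the interior of K). Then the set C' = {(w,v) ∈ ℝ^n × int(K) : ‖w - g(v)‖ < (f(v)/C_n)^(1/n)}, where g : ℝ^ρ → ℝ^n is any linear map and C_n > 0 is a constant, is a convex cone. -/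
open scoped NNReal

/-- If `K ⊆ ℝ^ρ` is a closed convex cone and `f` is nonnegative,
homogeneous of degree `n` and log-concave of degree `n` on the interior of `K`,
then for any linear map `g : ℝ^ρ → ℝ^n` and constant `Cₙ > 0` the set
`C' = {(w,v) : v ∈ int K, ‖w - g v‖ < (f v / Cₙ)^(1/n)}` is a convex cone. -/
theorem stmt0 (n ρ : ℕ) (hn : 0 < n)
    (K : Set (EuclideanSpace ℝ (Fin ρ)))
    (hKclosed : IsClosed K) (hKconv : Convex ℝ K)
    (hKcone : ∀ t : ℝ, 0 < t → ∀ v ∈ K, t • v ∈ K)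
    (f : EuclideanSpace ℝ (Fin ρ) → ℝ)
    (hf_nonneg : ∀ v ∈ interior K, 0 ≤ f v)
    (hf_hom : ∀ t : ℝ, 0 < t → ∀ v ∈ interior K, f (t • v) = t ^ n * f v)
    (hf_logconc : ∀ v ∈ interior K, ∀ w ∈ interior K,
      f v ^ (1 / (n : ℝ)) + f w ^ (1 / (n : ℝ)) ≤ f (v + w) ^ (1 / (n : ℝ)))
    (g : EuclideanSpace ℝ (Fin ρ) →ₗ[ℝ] EuclideanSpace ℝ (Fin n))
    (Cn : ℝ) (hCn : 0 < Cn) :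
    Convex ℝ {p : EuclideanSpace ℝ (Fin n) × EuclideanSpace ℝ (Fin ρ) |
        p.2 ∈ interior K ∧ ‖p.1 - g p.2‖ < (f p.2 / Cn) ^ (1 / (n : ℝ))} ∧
    ∀ t : ℝ, 0 < t →
      ∀ p ∈ {p : EuclideanSpace ℝ (Fin n) × EuclideanSpace ℝ (Fin ρ) |
        p.2 ∈ interior K ∧ ‖p.1 - g p.2‖ < (f p.2 / Cn) ^ (1 / (n : ℝ))},
      t • p ∈ {p : EuclideanSpace ℝ (Fin n) × EuclideanSpace ℝ (Fin ρ) |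
        p.2 ∈ interior K ∧ ‖p.1 - g p.2‖ < (f p.2 / Cn) ^ (1 / (n : ℝ))} := by
  set S := {p : EuclideanSpace ℝ (Fin n) × EuclideanSpace ℝ (Fin ρ) |
        p.2 ∈ interior K ∧ ‖p.1 - g p.2‖ < (f p.2 / Cn) ^ (1 / (n : ℝ))} with hS
  -- interior K is stable under positive scaling
  have hint_smul : ∀ t : ℝ, 0 < t → ∀ v ∈ interior K, t • v ∈ interior K := by
    intro t ht v hv
    have hopen : IsOpen ((t • ·) '' interior K) :=
      (isOpenMap_smul₀ (ht.ne' : t ≠ 0)) _ isOpen_interior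
    have hsub : (t • ·) '' interior K ⊆ K := by
      rintro _ ⟨x, hx, rfl⟩
      exact hKcone t ht x (interior_subset hx)
    exact interior_maximal hsub hopen ⟨v, hv, rfl⟩
  -- scaling property of the bound
  have hbound_smul : ∀ t : ℝ, 0 < t → ∀ v ∈ interior K,
      (f (t • v) / Cn) ^ (1 / (n : ℝ)) = t * (f v / Cn) ^ (1 / (n : ℝ)) := by
    intro t ht v hv
    rw [hf_hom t ht v hv]
    have h1 : t ^ n * f v / Cn = t ^ n * (f v / Cn) := by ring
    rw [h1, Real.mul_rpow (pow_nonneg ht.le n) (div_nonneg (hf_nonneg v hv) hCn.le)]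
    congr 1
    rw [← Real.rpow_natCast t n, ← Real.rpow_mul ht.le]
    rw [mul_one_div, div_self (by exact_mod_cast hn.ne'), Real.rpow_one]
  -- cone property
  have hcone : ∀ t : ℝ, 0 < t → ∀ p ∈ S, t • p ∈ S := by
    rintro t ht ⟨w, v⟩ ⟨hv, hlt⟩
    refine ⟨hint_smul t ht v hv, ?_⟩
    show ‖t • w - g (t • v)‖ < (f (t • v) / Cn) ^ (1 / (n : ℝ))
    rw [map_smul, ← smul_sub, norm_smul, Real.norm_eq_abs, abs_of_pos ht,
      hbound_smul t ht v hv]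
    exact mul_lt_mul_of_pos_left hlt ht
  -- additivity
  have hadd : ∀ p ∈ S, ∀ q ∈ S, p + q ∈ S := by
    rintro ⟨w₁, v₁⟩ ⟨hv₁, h₁⟩ ⟨w₂, v₂⟩ ⟨hv₂, h₂⟩
    have hvsum : v₁ + v₂ ∈ interior K := by
      have hmid : (1/2 : ℝ) • v₁ + (1/2 : ℝ) • v₂ ∈ interior K :=
        (hKconv.interior) hv₁ hv₂ (by norm_num) (by norm_num) (by norm_num)
      have := hint_smul 2 (by norm_num) _ hmid
      have heq : (2 : ℝ) • ((1/2 : ℝ) • v₁ + (1/2 : ℝ) • v₂) = v₁ + v₂ := by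
        rw [smul_add, smul_smul, smul_smul]; norm_num
      rwa [heq] at this
    refine ⟨hvsum, ?_⟩
    have hdiv : ∀ v ∈ interior K,
        (f v / Cn) ^ (1 / (n : ℝ)) = f v ^ (1 / (n : ℝ)) / Cn ^ (1 / (n : ℝ)) := by
      intro v hv
      exact Real.div_rpow (hf_nonneg v hv) hCn.le _
    have hkey : (f v₁ / Cn) ^ (1 / (n : ℝ)) + (f v₂ / Cn) ^ (1 / (n : ℝ))
        ≤ (f (v₁ + v₂) / Cn) ^ (1 / (n : ℝ)) := by
      rw [hdiv v₁ hv₁, hdiv v₂ hv₂, hdiv _ hvsum, ← add_div]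
      gcongr
      exact hf_logconc v₁ hv₁ v₂ hv₂
    have htri : ‖((w₁, v₁) + (w₂, v₂) : _ × _).1 - g (((w₁, v₁) + (w₂, v₂) : _ × _).2)‖
        ≤ ‖w₁ - g v₁‖ + ‖w₂ - g v₂‖ := by
      have : ((w₁, v₁) + (w₂, v₂) : _ × _).1 - g (((w₁, v₁) + (w₂, v₂) : _ × _).2)
          = (w₁ - g v₁) + (w₂ - g v₂) := by
        simp [map_add]
        abel
      rw [this]
      exact norm_add_le _ _
    calc ‖((w₁, v₁) + (w₂, v₂) : _ × _).1 - g (((w₁, v₁) + (w₂, v₂) : _ × _).2)‖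
        ≤ ‖w₁ - g v₁‖ + ‖w₂ - g v₂‖ := htri
      _ < (f v₁ / Cn) ^ (1 / (n : ℝ)) + (f v₂ / Cn) ^ (1 / (n : ℝ)) := add_lt_add h₁ h₂
      _ ≤ (f (v₁ + v₂) / Cn) ^ (1 / (n : ℝ)) := hkey
  constructor
  · intro p hp q hq a b ha hb hab
    rcases eq_or_lt_of_le ha with rfl | ha'
    · simp only [zero_add] at hab; subst hab; simpa using hq
    rcases eq_or_lt_of_le hb with rfl | hb'
    · simp only [add_zero] at hab; subst hab; simpa using hp
    exact hadd _ (hcone a ha' p hp) _ (hcone b hb' q hq)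
  · exact hcone
end

section
/- Let B ⊆ ℝ^(ρ-1) be a bounded convex body and g : B → ℝ≥0 a continuous concave function. Define K ⊆ ℝ^ρ as the closed cone over {1} × B (i.e., K = closure of {t·(1,b) : t ≥ 0, b ∈ B}) and f : K → ℝ≥0 by f(t·(1,b)) = t^n · g(b)^n. Then f is continuous, homogeneous of degree n, and log-concave of degree n on K. -/
/-- If `B ⊆ ℝ^(ρ-1)` is a bounded convex body and `g : B → ℝ≥0` is
continuous and concave, then the function `f` on the closed cone `K` over `{1} × B`
given by `f(t·(1,b)) = t^n g(b)^n` is continuous, homogeneous of degree `n`, and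
log-concave of degree `n` on `K`.  (Here `ρ - 1` is denoted `d`.) -/
theorem stmt4 (n d : ℕ) (hn : 0 < n)
    (B : Set (EuclideanSpace ℝ (Fin d)))
    (hBconv : Convex ℝ B) (hBcompact : IsCompact B) (hBint : (interior B).Nonempty)
    (g : EuclideanSpace ℝ (Fin d) → ℝ)
    (hg_nonneg : ∀ b ∈ B, 0 ≤ g b)
    (hg_cont : ContinuousOn g B)
    (hg_conc : ConcaveOn ℝ B g)
    (K : Set (ℝ × EuclideanSpace ℝ (Fin d)))
    (hK : K = closure {x : ℝ × EuclideanSpace ℝ (Fin d) |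
      ∃ t : ℝ, 0 ≤ t ∧ ∃ b ∈ B, x = (t, t • b)})
    (f : ℝ × EuclideanSpace ℝ (Fin d) → ℝ)
    (hf : ∀ t : ℝ, 0 ≤ t → ∀ b ∈ B, f (t, t • b) = t ^ n * g b ^ n) :
    ContinuousOn f K ∧
    (∀ s : ℝ, 0 < s → ∀ x ∈ K, f (s • x) = s ^ n * f x) ∧
    (∀ v ∈ K, ∀ w ∈ K,
      f v ^ (1 / (n : ℝ)) + f w ^ (1 / (n : ℝ)) ≤ f (v + w) ^ (1 / (n : ℝ))) := by
  obtain ⟨b₀, hb₀i⟩ := hBint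
  have hb₀ : b₀ ∈ B := interior_subset hb₀i
  obtain ⟨M, hM⟩ := isBounded_iff_forall_norm_le.mp hBcompact.isBounded
  obtain ⟨Mg, hMg⟩ := hBcompact.exists_bound_of_continuousOn hg_cont
  have hgM : ∀ b ∈ B, g b ≤ Mg := fun b hb =>
    (le_abs_self _).trans (by simpa [Real.norm_eq_abs] using hMg b hb)
  set C : Set (ℝ × EuclideanSpace ℝ (Fin d)) :=
    {x | ∃ t : ℝ, 0 ≤ t ∧ ∃ b ∈ B, x = (t, t • b)} with hCdef
  have hCclosed : IsClosed C := by
    apply IsSeqClosed.isClosed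
    intro x p hx hxp
    choose t ht b hbB hxe using hx
    have h1 : Filter.Tendsto (fun k => (x k).1) Filter.atTop (nhds p.1) :=
      (continuous_fst.tendsto p).comp hxp
    have htt : Filter.Tendsto t Filter.atTop (nhds p.1) :=
      h1.congr (fun k => by rw [hxe k])
    have h2 : Filter.Tendsto (fun k => (x k).2) Filter.atTop (nhds p.2) :=
      (continuous_snd.tendsto p).comp hxp
    have hp1 : 0 ≤ p.1 := ge_of_tendsto' htt ht
    rcases eq_or_lt_of_le hp1 with h0 | hpos
    · have hnorm : Filter.Tendsto (fun k => ‖(x k).2‖) Filter.atTop (nhds ‖p.2‖) :=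
        (continuous_norm.tendsto _).comp h2
      have hb2 : Filter.Tendsto (fun k => t k * max M 0) Filter.atTop (nhds (p.1 * max M 0)) :=
        htt.mul_const _
      have hle : ∀ k, ‖(x k).2‖ ≤ t k * max M 0 := by
        intro k
        rw [hxe k]
        calc ‖t k • b k‖ = t k * ‖b k‖ := by
              rw [norm_smul, Real.norm_of_nonneg (ht k)]
          _ ≤ t k * max M 0 :=
              mul_le_mul_of_nonneg_left ((hM _ (hbB k)).trans (le_max_left _ _)) (ht k)
      have hle2 : ‖p.2‖ ≤ p.1 * max M 0 := le_of_tendsto_of_tendsto' hnorm hb2 hle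
      have hp2 : p.2 = 0 := by
        rw [← h0, zero_mul] at hle2
        exact norm_le_zero_iff.mp hle2
      refine ⟨0, le_rfl, b₀, hb₀, ?_⟩
      rw [zero_smul, Prod.ext_iff]
      exact ⟨h0.symm, hp2⟩
    · have hne : p.1 ≠ 0 := hpos.ne'
      have hev : ∀ᶠ k in Filter.atTop, 0 < t k := htt.eventually (eventually_gt_nhds hpos)
      have hbt : Filter.Tendsto (fun k => (t k)⁻¹ • (x k).2) Filter.atTop (nhds (p.1⁻¹ • p.2)) :=
        (htt.inv₀ hne).smul h2
      have hbmem : p.1⁻¹ • p.2 ∈ B := by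
        refine hBcompact.isClosed.mem_of_tendsto hbt ?_
        filter_upwards [hev] with k hk
        rw [hxe k]
        simpa [inv_smul_smul₀ hk.ne'] using hbB k
      refine ⟨p.1, hp1, p.1⁻¹ • p.2, hbmem, ?_⟩
      rw [smul_inv_smul₀ hne]
  have hKC : K = C := by rw [hK]; exact hCclosed.closure_eq
  have hmem : ∀ x ∈ K, ∃ t : ℝ, 0 ≤ t ∧ ∃ b ∈ B, x = (t, t • b) := by
    rw [hKC]; exact fun x hx => hx
  have hf0 : f ((0:ℝ), (0:EuclideanSpace ℝ (Fin d))) = 0 := by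
    have := hf 0 le_rfl b₀ hb₀
    rw [zero_smul] at this
    simpa [zero_pow hn.ne'] using this
  have hfval : ∀ x ∈ K, 0 ≤ f x ∧ f x ≤ x.1 ^ n * Mg ^ n := by
    intro x hx
    obtain ⟨t, ht, b, hbB, rfl⟩ := hmem x hx
    rw [hf t ht b hbB]
    refine ⟨mul_nonneg (pow_nonneg ht n) (pow_nonneg (hg_nonneg b hbB) n), ?_⟩
    exact mul_le_mul_of_nonneg_left
      (pow_le_pow_left₀ (hg_nonneg b hbB) (hgM b hbB) n) (pow_nonneg ht n)
  refine ⟨?_, ?_, ?_⟩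
  · -- continuity
    intro x hx
    obtain ⟨t, ht, b, hbB, rfl⟩ := hmem x hx
    rcases eq_or_lt_of_le ht with rfl | htpos
    · have hq : ((0:ℝ), (0:ℝ) • b) = ((0:ℝ), (0:EuclideanSpace ℝ (Fin d))) := by
        rw [zero_smul]
      rw [hq] at hx ⊢
      show Filter.Tendsto f (nhdsWithin _ K) (nhds (f _))
      rw [hf0]
      apply squeeze_zero' (eventually_nhdsWithin_of_forall fun y hy => (hfval y hy).1)
        (eventually_nhdsWithin_of_forall fun y hy => (hfval y hy).2)
      have hT : Filter.Tendsto (fun y : ℝ × EuclideanSpace ℝ (Fin d) => y.1 ^ n * Mg ^ n)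
          (nhds ((0:ℝ), (0:EuclideanSpace ℝ (Fin d)))) (nhds ((0:ℝ) ^ n * Mg ^ n)) :=
        ((continuous_fst.pow n).mul continuous_const).tendsto _
      rw [zero_pow hn.ne', zero_mul] at hT
      exact hT.mono_left nhdsWithin_le_nhds
    · have hUopen : IsOpen {y : ℝ × EuclideanSpace ℝ (Fin d) | 0 < y.1} :=
        isOpen_lt continuous_const continuous_fst
      have hxU : ((t:ℝ), t • b) ∈ {y : ℝ × EuclideanSpace ℝ (Fin d) | 0 < y.1} := htpos
      rw [← continuousWithinAt_inter (hUopen.mem_nhds hxU)]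
      set S := K ∩ {y : ℝ × EuclideanSpace ℝ (Fin d) | 0 < y.1} with hS
      set h : ℝ × EuclideanSpace ℝ (Fin d) → EuclideanSpace ℝ (Fin d) :=
        fun y => y.1⁻¹ • y.2 with hhdef
      have hmaps : ∀ y ∈ S, h y ∈ B := by
        rintro y ⟨hyK, hyU⟩
        obtain ⟨s, hs, c, hcB, rfl⟩ := hmem y hyK
        have hspos : (0:ℝ) < s := hyU
        simpa [hhdef, inv_smul_smul₀ hspos.ne'] using hcB
      have hhx : h ((t:ℝ), t • b) = b := by
        simp [hhdef, inv_smul_smul₀ htpos.ne']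
      have hcont_h : ContinuousWithinAt h S ((t:ℝ), t • b) :=
        ((continuousAt_fst.inv₀ htpos.ne').smul continuousAt_snd).continuousWithinAt
      have hcg : ContinuousWithinAt (fun y => g (h y)) S ((t:ℝ), t • b) := by
        have hgb : ContinuousWithinAt g B (h ((t:ℝ), t • b)) := by
          rw [hhx]; exact hg_cont b hbB
        exact hgb.comp hcont_h hmaps
      have hF : ContinuousWithinAt
          (fun y : ℝ × EuclideanSpace ℝ (Fin d) => y.1 ^ n * g (h y) ^ n) S ((t:ℝ), t • b) :=
        ((continuousAt_fst.pow n).continuousWithinAt).mul (hcg.pow n)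
      refine hF.congr ?_ ?_
      · rintro y ⟨hyK, hyU⟩
        obtain ⟨s, hs, c, hcB, rfl⟩ := hmem y hyK
        have hspos : (0:ℝ) < s := hyU
        rw [hf s hs c hcB]
        simp [hhdef, inv_smul_smul₀ hspos.ne']
      · rw [hf t ht b hbB, hhx]
  · -- homogeneity
    intro s hs x hx
    obtain ⟨t, ht, b, hbB, rfl⟩ := hmem x hx
    have h1 : s • ((t:ℝ), t • b) = ((s * t : ℝ), (s * t) • b) := by
      simp [Prod.smul_mk, smul_smul]
    rw [h1, hf (s * t) (mul_nonneg hs.le ht) b hbB, hf t ht b hbB, mul_pow]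
    ring
  · -- log-concavity
    intro v hv w hw
    obtain ⟨t, ht, b, hbB, rfl⟩ := hmem v hv
    obtain ⟨s, hs, c, hcB, rfl⟩ := hmem w hw
    have hnR : (n:ℝ) ≠ 0 := Nat.cast_ne_zero.mpr hn.ne'
    have key : ∀ x : ℝ, 0 ≤ x → ((x ^ n : ℝ)) ^ (1/(n:ℝ)) = x := by
      intro x hx
      rw [← Real.rpow_natCast x n, ← Real.rpow_mul hx, mul_one_div, div_self hnR,
        Real.rpow_one]
    rcases eq_or_lt_of_le (add_nonneg ht hs) with h0 | hts
    · have ht0 : t = 0 := by linarith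
      have hs0 : s = 0 := by linarith
      subst ht0; subst hs0
      simp only [zero_smul, Prod.mk_add_mk, add_zero]
      rw [hf0, Real.zero_rpow (one_div_ne_zero hnR)]
      norm_num
    · set τ : ℝ := t + s with hτdef
      have hτ : 0 < τ := hts
      set a : ℝ := t / τ with hadef
      set μ : ℝ := s / τ with hμdef
      have ha : 0 ≤ a := div_nonneg ht hτ.le
      have hμ : 0 ≤ μ := div_nonneg hs hτ.le
      have hsum : a + μ = 1 := by rw [hadef, hμdef]; field_simp; exact hτdef.symm
      have hb'B : a • b + μ • c ∈ B := hBconv hbB hcB ha hμ hsum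
      have hτa : τ * a = t := by rw [hadef]; field_simp
      have hτμ : τ * μ = s := by rw [hμdef]; field_simp
      have hvw : ((t:ℝ), t • b) + ((s:ℝ), s • c) = ((τ:ℝ), τ • (a • b + μ • c)) := by
        refine Prod.ext rfl ?_
        show t • b + s • c = τ • (a • b + μ • c)
        rw [smul_add, smul_smul, smul_smul, hτa, hτμ]
      rw [hvw, hf τ hτ.le _ hb'B, hf t ht b hbB, hf s hs c hcB,
        ← mul_pow, ← mul_pow, ← mul_pow,
        key _ (mul_nonneg ht (hg_nonneg b hbB)),
        key _ (mul_nonneg hs (hg_nonneg c hcB)),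
        key _ (mul_nonneg hτ.le (hg_nonneg _ hb'B))]
      have hconc := hg_conc.2 hbB hcB ha hμ hsum
      rw [smul_eq_mul, smul_eq_mul] at hconc
      have hmul := mul_le_mul_of_nonneg_left hconc hτ.le
      calc t * g b + s * g c = τ * (a * g b + μ * g c) := by
            rw [mul_add, ← mul_assoc, ← mul_assoc, hτa, hτμ]
        _ ≤ τ * g (a • b + μ • c) := hmul
end
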